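/- Let D = {x ∈ ℝⁿ : Ax = b} be a nonempty affine set, C ⊆ ℝⁿ nonempty closed convex, α₁ ∈ (0,1], α₂ ∈ (0,2], and define the GAP envelope F(x) = ½⟨Px,x⟩ - p^{α₂}_C(Px+q), where P = (1-α₁)Id + α₁N, N is the orthogonal projection onto {x : Ax = 0}, q = α₁d with Π_D(x) = Nx + d, and p^{α₂}_C(x) = α₂ r*_C(x) + ((1-α₂)/2)‖x‖² with r_C(x) = ι_C(x) + ½‖x‖². Then F is convex. -/

import Mathlib

/-!
Since `⟪u, y⟫ - ‖y‖² / 2 = ‖u‖² / 2 - ‖u - y‖² / 2`, the supremum over `C` equals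
`‖u‖² / 2 - d_C(u)² / 2`, where `d_C` is the distance to `C`. With `u = P x + q` the envelope
becomes `½ (⟪P x, x⟫ - ‖P x‖²) + (α₂ / 2) d_C(P x + q)²` plus an affine function of `x`.
Writing `x = N x + r` with `r ⊥ range N`, one has `P x = N x + (1 - α₁) r`, hence
`⟪P x, x⟫ - ‖P x‖² = ⟪P x, α₁ r⟫ = α₁ (1 - α₁) ‖x - N x‖²`. Both remaining terms are convex:
the first because `α₁ ≤ 1`, the second because the distance to a convex set is convex.
-/

open scoped RealInnerProductSpace
open Metric Set

section Normed

variable {E : Type*} [NormedAddCommGroup E] [NormedSpace ℝ E]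

theorem convexOn_infDist {C : Set E} (hC : Convex ℝ C) :
    ConvexOn ℝ univ (infDist · C) := by
  rcases C.eq_empty_or_nonempty with rfl | hne
  · simpa only [infDist_empty] using convexOn_const (0 : ℝ) convex_univ
  refine ⟨convex_univ, fun x _ y _ a b ha hb hab => ?_⟩
  refine le_of_forall_pos_le_add fun ε hε => ?_
  obtain ⟨u, hu, hxu⟩ := (infDist_lt_iff hne).1 (lt_add_of_pos_right (infDist x C) hε)
  obtain ⟨v, hv, hyv⟩ := (infDist_lt_iff hne).1 (lt_add_of_pos_right (infDist y C) hε)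
  calc infDist (a • x + b • y) C
      ≤ dist (a • x + b • y) (a • u + b • v) := infDist_le_dist_of_mem (hC hu hv ha hb hab)
    _ ≤ a * dist x u + b * dist y v := by
      refine (dist_add_add_le _ _ _ _).trans_eq ?_
      rw [dist_smul₀, dist_smul₀, Real.norm_of_nonneg ha, Real.norm_of_nonneg hb]
    _ ≤ a * (infDist x C + ε) + b * (infDist y C + ε) := by gcongr
    _ = a • infDist x C + b • infDist y C + ε := by
      rw [smul_eq_mul, smul_eq_mul]; linear_combination ε * hab

theorem convexOn_infDist_sq {C : Set E} (hC : Convex ℝ C) :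
    ConvexOn ℝ univ (fun x => infDist x C ^ 2) :=
  (convexOn_infDist hC).pow (fun _ _ => infDist_nonneg) 2

theorem convexOn_norm_sq : ConvexOn ℝ univ (fun x : E => ‖x‖ ^ 2) :=
  (convexOn_norm convex_univ).pow (fun _ _ => norm_nonneg _) 2

end Normed

section InnerProduct

variable {E : Type*} [NormedAddCommGroup E] [InnerProductSpace ℝ E]

theorem inner_sub_half_norm_sq_eq (u y : E) :
    ⟪u, y⟫ - ‖y‖ ^ 2 / 2 = ‖u‖ ^ 2 / 2 - ‖u - y‖ ^ 2 / 2 := by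
  rw [norm_sub_sq_real]; ring

theorem iSup_inner_sub_half_norm_sq [ProperSpace E] {C : Set E} (hC : IsClosed C)
    (hne : C.Nonempty) (u : E) :
    ⨆ y : C, (⟪u, (y : E)⟫ - ‖(y : E)‖ ^ 2 / 2) = ‖u‖ ^ 2 / 2 - infDist u C ^ 2 / 2 := by
  have hle : ∀ y ∈ C, ⟪u, y⟫ - ‖y‖ ^ 2 / 2 ≤ ‖u‖ ^ 2 / 2 - infDist u C ^ 2 / 2 := by
    intro y hy
    have h := infDist_le_dist_of_mem (x := u) hy
    rw [inner_sub_half_norm_sq_eq, ← dist_eq_norm]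
    gcongr
    exact infDist_nonneg
  have : Nonempty C := hne.to_subtype
  obtain ⟨y₀, hy₀, hdist⟩ := hC.exists_infDist_eq_dist hne u
  have hbdd : BddAbove (range fun y : C => ⟪u, (y : E)⟫ - ‖(y : E)‖ ^ 2 / 2) :=
    ⟨_, forall_mem_range.2 fun y => hle y y.2⟩
  refine le_antisymm (ciSup_le fun y => hle y y.2) (le_ciSup_of_le hbdd ⟨y₀, hy₀⟩ ?_)
  rw [inner_sub_half_norm_sq_eq, hdist, dist_eq_norm]

theorem inner_sub_norm_sq_relaxed_starProjection (K : Submodule ℝ E)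
    [K.HasOrthogonalProjection] (α : ℝ) (x : E) :
    ⟪(1 - α) • x + α • K.starProjection x, x⟫ - ‖(1 - α) • x + α • K.starProjection x‖ ^ 2
      = α * (1 - α) * ‖x - K.starProjection x‖ ^ 2 := by
  set p := K.starProjection x
  have horth : ⟪p, x - p⟫ = 0 := by
    rw [real_inner_comm]; exact K.starProjection_inner_eq_zero x p (K.starProjection_apply_mem x)
  have hz : (1 - α) • x + α • p = p + (1 - α) • (x - p) := by module
  have hr : x - (p + (1 - α) • (x - p)) = α • (x - p) := by module
  rw [hz, ← real_inner_self_eq_norm_sq, ← inner_sub_right, hr, ← real_inner_self_eq_norm_sq,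
    real_inner_smul_right, inner_add_left, real_inner_smul_left, horth]
  ring

end InnerProduct

theorem stmt18 {n m : ℕ}
    (A : EuclideanSpace ℝ (Fin n) →L[ℝ] EuclideanSpace ℝ (Fin m))
    (C : Set (EuclideanSpace ℝ (Fin n))) (hCne : C.Nonempty)
    (hCcl : IsClosed C) (hCcv : Convex ℝ C)
    (α₁ α₂ : ℝ) (hα₁0 : 0 < α₁) (hα₁1 : α₁ ≤ 1) (hα₂0 : 0 < α₂)
    (N : EuclideanSpace ℝ (Fin n) →L[ℝ] EuclideanSpace ℝ (Fin n))
    (hN : ∀ x, N x = (Submodule.orthogonalProjectionOnto (LinearMap.ker (A : EuclideanSpace ℝ (Fin n) →ₗ[ℝ] EuclideanSpace ℝ (Fin m))) x : EuclideanSpace ℝ (Fin n)))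
    (P : EuclideanSpace ℝ (Fin n) →L[ℝ] EuclideanSpace ℝ (Fin n))
    (hP : P = (1 - α₁) • (1 : EuclideanSpace ℝ (Fin n) →L[ℝ] EuclideanSpace ℝ (Fin n)) + α₁ • N)
    (q : EuclideanSpace ℝ (Fin n)) :
    ConvexOn ℝ Set.univ (fun x =>
      1/2 * ⟪P x, x⟫ -
        (α₂ * (⨆ y : C, (⟪P x + q, (y : EuclideanSpace ℝ (Fin n))⟫ -
            ‖(y : EuclideanSpace ℝ (Fin n))‖^2 / 2)) +
          (1 - α₂)/2 * ‖P x + q‖^2)) := by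
  set K := LinearMap.ker (A : EuclideanSpace ℝ (Fin n) →ₗ[ℝ] EuclideanSpace ℝ (Fin m))
  have hNK : ∀ x, N x = K.starProjection x := hN
  have hPx : ∀ x, P x = (1 - α₁) • x + α₁ • K.starProjection x := by
    intro x; rw [hP, ← hNK]; rfl
  have hres : ConvexOn ℝ univ fun x => α₁ * (1 - α₁) / 2 * ‖x - N x‖ ^ 2 := by
    have := (convexOn_norm_sq.comp_linearMap (1 - N : _ →L[ℝ] _).toLinearMap).smul
      (by nlinarith : 0 ≤ α₁ * (1 - α₁) / 2)
    simpa [Function.comp_def] using this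
  have hdist : ConvexOn ℝ univ fun x => α₂ / 2 * infDist (P x + q) C ^ 2 := by
    have := ((convexOn_infDist_sq hCcv).comp_affineMap
      (P.toLinearMap.toAffineMap + AffineMap.const ℝ _ q)).smul (by positivity : 0 ≤ α₂ / 2)
    simpa [Function.comp_def] using this
  have haff : ConvexOn ℝ univ fun x => -⟪q, P x⟫ - ‖q‖ ^ 2 / 2 := by
    have := (((innerSL ℝ q).comp P).toLinearMap.concaveOn convex_univ).neg.add_const (-(‖q‖ ^ 2 / 2))
    exact this.congr fun x _ => by simp [sub_eq_add_neg]
  refine ((hres.add hdist).add haff).congr fun x _ => ?_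
  have hquad := inner_sub_norm_sq_relaxed_starProjection K α₁ x
  rw [← hPx, ← hNK] at hquad
  simp only [Pi.add_apply]
  rw [iSup_inner_sub_half_norm_sq hCcl hCne, norm_add_sq_real, real_inner_comm q]
  linear_combination -hquad / 2
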